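/- arXiv:1908.04189 — 2 statements merged into one kernel-verified Lean document; each statement's English description precedes it below -/
import Mathlib

section
/- The cycle C_n is a minimal DPDP-graph if and only if n ∈ {3, 6, 9}. -/
open SimpleGraph

variable {V : Type*}

/-- `D` is a dominating set of `G`. -/
def Dominating (G : SimpleGraph V) (D : Set V) : Prop :=
  ∀ v ∉ D, ∃ u ∈ D, G.Adj v u

/-- `P` is a paired-dominating set of `G`: it is dominating and the induced
subgraph `G[P]` contains a perfect matching (given by an involutive pairing of
the vertices of `P` along edges inside `P`). -/
def PairedDominating (G : SimpleGraph V) (P : Set V) : Prop :=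
  Dominating G P ∧ ∃ m : V → V, ∀ v ∈ P, m v ∈ P ∧ G.Adj v (m v) ∧ m (m v) = v

/-- `(D, P)` is a DP-pair: a partition of the vertex set into a dominating set `D`
and a paired-dominating set `P`. -/
def IsDPPair (G : SimpleGraph V) (D P : Set V) : Prop :=
  Disjoint D P ∧ D ∪ P = Set.univ ∧ Dominating G D ∧ PairedDominating G P

/-- `G` is a DPDP-graph: its vertex set partitions into a dominating set and a
paired-dominating set. -/
def IsDPDP (G : SimpleGraph V) : Prop := ∃ D P, IsDPPair G D P

/-- A minimal DPDP-graph: a DPDP-graph no proper spanning subgraph of which is DPDP. -/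
def IsMinimalDPDP (G : SimpleGraph V) : Prop :=
  IsDPDP G ∧ ∀ G' : SimpleGraph V, G' < G → ¬ IsDPDP G'

/-- A leaf is a vertex of degree 1. -/
def IsLeaf (G : SimpleGraph V) (v : V) : Prop := (G.neighborSet v).ncard = 1

/-- A support vertex is a vertex adjacent to at least one leaf. -/
def IsSupport (G : SimpleGraph V) (v : V) : Prop := ∃ u, G.Adj v u ∧ IsLeaf G u

/-!
In a DP-pair `(D, P)` every vertex of `P` has its partner and a neighbour in `D`, and every vertex
of `D` has a neighbour in `P`. In a graph of maximum degree two this forces each vertex of `P` to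
have exactly one neighbour in `D`, and double counting the `D`–`P` edges gives
`|D| ≤ |P| ≤ 2|D| - ℓ`, where `ℓ` counts the vertices of degree less than two (they all lie in
`D`). Since `|P|` is even and `|D| + |P| = n`, this rules out `C₅` and the paths `P₃`, `P₆`, `P₉`.
A proper spanning subgraph of `Cₙ` misses an edge, so after a rotation it is a spanning subgraph
of `Pₙ`; hence `Cₙ` is minimal exactly when it is a DPDP-graph and `Pₙ` is not. Periodic words in
`0` (for `D`) and `12` (for a matched pair of `P`) show that `C₃ₖ` is a DPDP-graph, and so is `Pₙ`
for `n ≥ 4`, `n ∉ {5, 6, 9}`.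
-/

open Finset

theorem IsDPDP.of_bijective_hom {W : Type*} {G : SimpleGraph V} {H : SimpleGraph W} (f : G →g H)
    (hf : Function.Bijective f) (hG : IsDPDP G) : IsDPDP H := by
  obtain ⟨D, P, hdisj, hcover, hD, hP, m, hm⟩ := hG
  let e := Equiv.ofBijective f hf
  have adj : ∀ {w u}, G.Adj (e.symm w) u → H.Adj w (e u) := fun h => by
    simpa only [Equiv.ofBijective_apply, Equiv.ofBijective_apply_symm_apply, e] using f.map_adj h
  have transfer : ∀ S : Set V, Dominating G S → Dominating H (e.symm ⁻¹' S) := by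
    intro S hS w hw
    obtain ⟨u, hu, hadj⟩ := hS (e.symm w) hw
    exact ⟨e u, by simpa using hu, adj hadj⟩
  refine ⟨e.symm ⁻¹' D, e.symm ⁻¹' P, hdisj.preimage _, ?_, transfer D hD, transfer P hP,
    fun w => e (m (e.symm w)), fun w hw => ?_⟩
  · rw [← Set.preimage_union, hcover, Set.preimage_univ]
  · obtain ⟨hmP, hadj, hmm⟩ := hm _ hw
    exact ⟨by simpa using hmP, adj hadj, by simp [hmm]⟩

section Counting

variable {G : SimpleGraph V} {D P : Finset V}

theorem IsDPPair.card_add_card [Fintype V] [DecidableEq V] (h : IsDPPair G D P) :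
    #D + #P = Fintype.card V := by
  rw [← card_union_of_disjoint (disjoint_coe.1 h.1), ← card_univ]
  congr
  exact_mod_cast h.2.1

theorem IsDPPair.even_card (h : IsDPPair G D P) : Even #P := by
  obtain ⟨m, hm⟩ := h.2.2.2.2
  rw [← ZMod.natCast_eq_zero_iff_even, card_eq_sum_ones, Nat.cast_sum, Nat.cast_one]
  exact sum_involution (fun v _ => m v) (fun _ _ => by decide)
    (fun v hv _ => (hm v hv).2.1.ne') (fun v hv => (hm v hv).1) (fun v hv => (hm v hv).2.2)

variable [DecidableRel G.Adj]

theorem IsDPPair.one_le_card_filter_adj_left (h : IsDPPair G D P) {u : V} (hu : u ∈ D) :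
    1 ≤ #{v ∈ P | G.Adj u v} := by
  obtain ⟨v, hv, hadj⟩ := h.2.2.2.1 u (Set.disjoint_left.1 h.1 hu)
  exact card_pos.2 ⟨v, mem_filter.2 ⟨hv, hadj⟩⟩

theorem IsDPPair.one_le_card_filter_adj_right (h : IsDPPair G D P) {v : V} (hv : v ∈ P) :
    1 ≤ #{u ∈ D | G.Adj u v} := by
  obtain ⟨u, hu, hadj⟩ := h.2.2.1 v (Set.disjoint_right.1 h.1 hv)
  exact card_pos.2 ⟨u, mem_filter.2 ⟨hu, hadj.symm⟩⟩

variable [Fintype V]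

theorem IsDPPair.card_filter_adj_add_one_le_degree [DecidableEq V] (h : IsDPPair G D P) {v : V}
    (hv : v ∈ P) : #{u ∈ D | G.Adj u v} + 1 ≤ G.degree v := by
  obtain ⟨m, hm⟩ := h.2.2.2.2
  obtain ⟨hmP, hadj, -⟩ := hm v hv
  have hmD : m v ∉ D := Set.disjoint_right.1 h.1 hmP
  rw [← card_insert_of_notMem fun hm => hmD (mem_filter.1 hm).1]
  refine card_le_card fun u hu => ?_
  rw [mem_neighborFinset]
  rcases mem_insert.1 hu with rfl | hu
  · exact hadj
  · exact (mem_filter.1 hu).2.symm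

theorem IsDPPair.two_le_degree [DecidableEq V] (h : IsDPPair G D P) {v : V} (hv : v ∈ P) :
    2 ≤ G.degree v :=
  (add_le_add_left (h.one_le_card_filter_adj_right hv) 1).trans
    (h.card_filter_adj_add_one_le_degree hv)

theorem IsDPPair.card_le_sum_degree (h : IsDPPair G D P) : #P ≤ ∑ u ∈ D, G.degree u :=
  calc #P ≤ ∑ v ∈ P, #{u ∈ D | G.Adj u v} := by
        simpa using card_nsmul_le_sum P _ 1 fun v hv => h.one_le_card_filter_adj_right hv
    _ = ∑ u ∈ D, #{v ∈ P | G.Adj u v} := (sum_card_bipartiteAbove_eq_sum_card_bipartiteBelow _).symm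
    _ ≤ ∑ u ∈ D, G.degree u := sum_le_sum fun u _ => card_le_card fun v hv => by
      simpa using (mem_filter.1 hv).2

theorem IsDPPair.card_add_card_le_sum_degree [DecidableEq V] (h : IsDPPair G D P) :
    #D + #P ≤ ∑ v ∈ P, G.degree v :=
  calc #D + #P ≤ ∑ u ∈ D, #{v ∈ P | G.Adj u v} + #P := by
        gcongr
        simpa using card_nsmul_le_sum D _ 1 fun u hu => h.one_le_card_filter_adj_left hu
    _ = ∑ v ∈ P, (#{u ∈ D | G.Adj u v} + 1) := by
        rw [sum_add_distrib, sum_const, smul_eq_mul, mul_one]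
        exact congrArg (· + #P) (sum_card_bipartiteAbove_eq_sum_card_bipartiteBelow _)
    _ ≤ ∑ v ∈ P, G.degree v := sum_le_sum fun v hv => h.card_filter_adj_add_one_le_degree hv

theorem IsDPDP.exists_card_of_degree_le_two (hdeg : ∀ v, G.degree v ≤ 2) (hG : IsDPDP G) :
    ∃ d p, d + p = Fintype.card V ∧ Even p ∧ d ≤ p ∧ p + #{v | G.degree v < 2} ≤ 2 * d := by
  classical
  obtain ⟨D, P, h⟩ := hG
  replace h : IsDPPair G ↑D.toFinset ↑P.toFinset := by simpa using h
  refine ⟨_, _, h.card_add_card, h.even_card, ?_, ?_⟩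
  · have := h.card_add_card_le_sum_degree.trans (sum_le_card_nsmul _ _ 2 fun v _ => hdeg v)
    rw [smul_eq_mul] at this
    omega
  · have hlow : ({v | G.degree v < 2} : Finset V) = {u ∈ D.toFinset | G.degree u < 2} := by
      ext v
      simp only [mem_filter, mem_univ, true_and, iff_and_self]
      intro hv
      by_contra hD
      have hP : v ∈ P.toFinset := (Set.eq_univ_iff_forall.1 h.2.1 v).resolve_left hD
      exact (h.two_le_degree hP).not_gt hv
    calc #P.toFinset + #{v | G.degree v < 2}
        ≤ ∑ u ∈ D.toFinset, (G.degree u + if G.degree u < 2 then 1 else 0) := by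
          rw [sum_add_distrib, sum_boole, hlow, Nat.cast_id]
          gcongr
          exact h.card_le_sum_degree
      _ ≤ ∑ _u ∈ D.toFinset, 2 := sum_le_sum fun u _ => by have := hdeg u; split_ifs <;> omega
      _ = 2 * #D.toFinset := by rw [sum_const, smul_eq_mul, mul_comm]

end Counting

instance (n : ℕ) : DecidableRel (pathGraph n).Adj := fun _ _ => decidable_of_iff' _ pathGraph_adj

theorem pathGraph_degree_le_two {n : ℕ} (v : Fin (n + 2)) : (pathGraph (n + 2)).degree v ≤ 2 :=
  (degree_le_of_le pathGraph_le_cycleGraph).trans (cycleGraph_degree_two_le ▸ card_le_two)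

theorem pathGraph_degree_lt_two {n : ℕ} {v : Fin n} (hv : v.val = 0 ∨ v.val + 1 = n) :
    (pathGraph n).degree v < 2 := by
  rw [Nat.lt_succ_iff, ← card_neighborFinset_eq_degree, card_le_one]
  intro a ha b hb
  simp only [mem_neighborFinset, pathGraph_adj] at ha hb
  ext
  omega

theorem not_isDPDP_pathGraph {n : ℕ} (hn : n = 3 ∨ n = 6 ∨ n = 9) : ¬ IsDPDP (pathGraph n) := by
  obtain ⟨n, rfl⟩ : ∃ k, n = k + 2 := ⟨n - 2, by omega⟩
  intro h
  obtain ⟨d, p, hdp, ⟨k, rfl⟩, hle, hlow⟩ := h.exists_card_of_degree_le_two pathGraph_degree_le_two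
  have hends : #{0, Fin.last _} ≤ #{v : Fin (n + 2) | (pathGraph (n + 2)).degree v < 2} :=
    card_le_card fun v hv => by
      rcases mem_insert.1 hv with rfl | hv
      · simpa using pathGraph_degree_lt_two (Or.inl rfl)
      · rw [mem_singleton.1 hv]
        simpa using pathGraph_degree_lt_two (Or.inr rfl)
  rw [card_pair (Fin.ext_iff.not.2 (by simp))] at hends
  rw [Fintype.card_fin] at hdp
  omega

theorem not_isDPDP_cycleGraph_five : ¬ IsDPDP (cycleGraph 5) := fun h => by
  obtain ⟨d, p, hdp, ⟨k, rfl⟩, hle, hlow⟩ :=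
    h.exists_card_of_degree_le_two fun v => (cycleGraph_degree_three_le (n := 2)).le
  rw [Fintype.card_fin] at hdp
  omega

theorem pathGraph_adj_of_cycleGraph_adj {n : ℕ} {u v : Fin (n + 2)}
    (h : (cycleGraph (n + 2)).Adj u v) (hne : s(u, v) ≠ s(0, Fin.last _)) :
    (pathGraph (n + 2)).Adj u v := by
  have sub_eq_one : ∀ a b : Fin (n + 2), (a - b).val = 1 →
      a.val = b.val + 1 ∨ (a.val = 0 ∧ b.val = n + 1) := by
    intro a b hab
    rcases le_or_gt b a with hba | hba
    · rw [Fin.coe_sub_iff_le.2 hba] at hab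
      omega
    · rw [Fin.coe_sub_iff_lt.2 hba] at hab
      rw [Fin.lt_def] at hba
      omega
  rw [Ne, Sym2.eq_iff, Fin.ext_iff, Fin.ext_iff, Fin.ext_iff, Fin.ext_iff] at hne
  simp only [Fin.val_zero, Fin.val_last] at hne
  rw [pathGraph_adj]
  rcases cycleGraph_adj'.1 h with h | h <;> have := sub_eq_one _ _ h <;> omega

theorem pathGraph_lt_cycleGraph {n : ℕ} : pathGraph (n + 3) < cycleGraph (n + 3) := by
  refine pathGraph_le_cycleGraph.lt_of_ne fun h => ?_
  have hadj : (cycleGraph (n + 3)).Adj 0 (Fin.last _) := by simp [cycleGraph_adj]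
  rw [← h, pathGraph_adj] at hadj
  simp at hadj

theorem exists_bijective_hom_pathGraph_of_lt_cycleGraph {n : ℕ} {G : SimpleGraph (Fin (n + 2))}
    (h : G < cycleGraph (n + 2)) : ∃ f : G →g pathGraph (n + 2), Function.Bijective f := by
  obtain ⟨c, hc⟩ : ∃ c, ¬ G.Adj c (c + 1) := by
    by_contra! hG
    refine h.not_ge fun a b hab => ?_
    rcases cycleGraph_adj.1 hab with hab | hab
    · obtain rfl := sub_eq_iff_eq_add'.1 hab
      exact (hG b).symm
    · obtain rfl := sub_eq_iff_eq_add'.1 hab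
      exact hG a
  refine ⟨⟨fun x => x - (c + 1), fun {x y} hxy => pathGraph_adj_of_cycleGraph_adj ?_ ?_⟩,
    (Equiv.subRight (c + 1)).bijective⟩
  · rw [cycleGraph_adj, sub_sub_sub_cancel_right, sub_sub_sub_cancel_right]
    exact cycleGraph_adj.1 (h.le hxy)
  · have eq_of_sub_eq_last : ∀ z : Fin (n + 2), z - (c + 1) = Fin.last _ → z = c := fun z hz => by
      rw [sub_eq_iff_eq_add.1 hz, add_comm c, ← add_assoc, Fin.last_add_one, zero_add]
    rintro hs
    rcases Sym2.eq_iff.1 hs with ⟨hx, hy⟩ | ⟨hx, hy⟩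
    · rw [sub_eq_zero.1 hx, eq_of_sub_eq_last y hy] at hxy
      exact hc hxy.symm
    · rw [sub_eq_zero.1 hy, eq_of_sub_eq_last x hx] at hxy
      exact hc hxy

-- Label `0` marks `D`; a vertex labelled `1` is matched with its successor, one labelled `≥ 2`
-- with its predecessor.
theorem isDPDP_of_word {n : ℕ} {G : SimpleGraph (Fin n)} (hG : pathGraph n ≤ G) (w : ℕ → ℕ)
    (hw₁ : ∀ i < n, w i = 1 → i + 1 < n ∧ w (i + 1) = 2)
    (hw₂ : ∀ i < n, 2 ≤ w i → 0 < i ∧ w (i - 1) = 1)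
    (hD : Dominating G {v | w v = 0}) (hP : Dominating G {v | w v ≠ 0}) : IsDPDP G := by
  have partner_lt (v : Fin n) : (if w v = 1 then v.val + 1 else v.val - 1) < n := by
    split_ifs with h
    · exact (hw₁ v v.2 h).1
    · omega
  refine ⟨{v | w v = 0}, {v | w v ≠ 0}, Set.disjoint_left.2 fun v h h' => h' h, ?_, hD,
    hP, fun v => ⟨_, partner_lt v⟩, fun v hv => ?_⟩
  · ext v
    simp [em]
  · have hv' : v.val < n := v.2
    simp only [Set.mem_ofPred_eq] at hv ⊢
    by_cases h1 : w v = 1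
    · obtain ⟨hlt, h2⟩ := hw₁ v hv' h1
      simp only [h1, if_true, h2]
      refine ⟨by omega, hG (pathGraph_adj.2 (Or.inl rfl)), Fin.ext ?_⟩
      simp
    · obtain ⟨hpos, h2⟩ := hw₂ v hv' (by omega)
      simp only [h1, if_false, h2]
      refine ⟨by omega, hG (pathGraph_adj.2 (Or.inr (by dsimp only; omega))), Fin.ext ?_⟩
      simp only [if_true]
      omega

theorem exists_pathGraph_adj {n : ℕ} {v : Fin n} {Q : ℕ → Prop}
    (h : (v.val + 1 < n ∧ Q (v.val + 1)) ∨ (0 < v.val ∧ Q (v.val - 1))) :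
    ∃ u : Fin n, Q u ∧ (pathGraph n).Adj v u := by
  rcases h with ⟨hlt, hQ⟩ | ⟨hpos, hQ⟩
  · exact ⟨⟨_, hlt⟩, hQ, pathGraph_adj.2 (Or.inl rfl)⟩
  · exact ⟨⟨_, by omega⟩, hQ, pathGraph_adj.2 (Or.inr (by dsimp only; omega))⟩

theorem exists_cycleGraph_adj {n : ℕ} {v : Fin (n + 2)} {Q : ℕ → Prop}
    (h : (v.val + 1 < n + 2 ∧ Q (v.val + 1)) ∨ (0 < v.val ∧ Q (v.val - 1)) ∨
      (v.val = n + 1 ∧ Q 0)) :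
    ∃ u : Fin (n + 2), Q u ∧ (cycleGraph (n + 2)).Adj v u := by
  rcases h with h | h | ⟨hlast, hQ⟩
  · obtain ⟨u, hQ, hu⟩ := exists_pathGraph_adj (Or.inl h)
    exact ⟨u, hQ, pathGraph_le_cycleGraph hu⟩
  · obtain ⟨u, hQ, hu⟩ := exists_pathGraph_adj (Or.inr h)
    exact ⟨u, hQ, pathGraph_le_cycleGraph hu⟩
  · refine ⟨0, hQ, ?_⟩
    rw [show v = Fin.last _ from Fin.ext hlast, cycleGraph_adj]
    simp

theorem isDPDP_cycleGraph {n : ℕ} (hn : 0 < n) (h3 : 3 ∣ n) : IsDPDP (cycleGraph n) := by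
  obtain ⟨n, rfl⟩ : ∃ k, n = k + 2 := ⟨n - 2, by omega⟩
  refine isDPDP_of_word pathGraph_le_cycleGraph (· % 3) (fun i _ _ => by omega)
    (fun i _ _ => by omega)
    (fun v (_ : v.val % 3 ≠ 0) => exists_cycleGraph_adj (Q := (· % 3 = 0)) (by omega))
    (fun v (_ : ¬ v.val % 3 ≠ 0) => exists_cycleGraph_adj (Q := (· % 3 ≠ 0)) (by omega))

theorem isDPDP_pathGraph {n : ℕ} (h4 : 4 ≤ n) (h5 : n ≠ 5) (h6 : n ≠ 6) (h9 : n ≠ 9) :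
    IsDPDP (pathGraph n) := by
  -- the word `(0120)^j (012)^k 0` with `j = (n - 1) % 3` and `k ≥ 1`
  set w : ℕ → ℕ := fun i => (i - 4 * min ((n - 1) % 3) (i / 4)) % 3 with hw
  refine isDPDP_of_word le_rfl w (fun i _ _ => by simp only [hw] at *; omega)
    (fun i _ _ => by simp only [hw] at *; omega)
    (fun v (_ : w v ≠ 0) => exists_pathGraph_adj (Q := (w · = 0)) (by simp only [hw] at *; omega))
    (fun v (_ : ¬ w v ≠ 0) => exists_pathGraph_adj (Q := (w · ≠ 0)) (by simp only [hw] at *; omega))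

/-- The cycle `C_n` is a minimal DPDP-graph if and only if `n ∈ {3, 6, 9}`. -/
theorem stmt12 (n : ℕ) (hn : 3 ≤ n) :
    IsMinimalDPDP (SimpleGraph.cycleGraph n) ↔ n ∈ ({3, 6, 9} : Set ℕ) := by
  obtain ⟨n, rfl⟩ : ∃ k, n = k + 3 := ⟨n - 3, by omega⟩
  simp only [Set.mem_insert_iff, Set.mem_singleton_iff]
  constructor
  · rintro ⟨hC, hmin⟩
    by_contra h
    obtain rfl | h5 := eq_or_ne n 2
    · exact not_isDPDP_cycleGraph_five hC
    · exact hmin _ pathGraph_lt_cycleGraph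
        (isDPDP_pathGraph (by omega) (by omega) (by omega) (by omega))
  · intro h
    refine ⟨isDPDP_cycleGraph (by omega) (by omega), fun G hG hGDP => ?_⟩
    obtain ⟨f, hf⟩ := exists_bijective_hom_pathGraph_of_lt_cycleGraph (n := n + 1) hG
    exact not_isDPDP_pathGraph h (hGDP.of_bijective_hom f hf)
end

section
/- If H is a corona graph (a graph obtained from some graph F by attaching at least one pendant edge to every vertex of F), then S_2(H), the double subdivision of H, is a minimal DPDP-graph. -/
open SimpleGraph

variable {V : Type*}

/-- The double subdivision of `H`: each edge `uv` of `H` is replaced by a path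
`u, u_e, v_e, v` with two new internal vertices. The new vertex adjacent to `u`
on the edge `uv` is encoded as `Sum.inr ⟨(u, v), _⟩`. -/
def S2 (H : SimpleGraph V) : SimpleGraph (V ⊕ {e : V × V // H.Adj e.1 e.2}) where
  Adj x y :=
    match x, y with
    | Sum.inl u, Sum.inr e => u = e.1.1
    | Sum.inr e, Sum.inl u => u = e.1.1
    | Sum.inr e, Sum.inr f => e.1.1 = f.1.2 ∧ e.1.2 = f.1.1
    | _, _ => False
  symm := by
    constructor
    rintro (u | e) (w | f) h <;> simp_all
  loopless := by
    constructor
    rintro (u | e) h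
    · exact h
    · exact H.irrefl (h.1 ▸ e.2)


/-!
Partition `S₂(H)` into the original vertices and the subdivision vertices: the former dominate,
the latter are paired along the middle edges. For minimality, take a DP-pair `(D, P)` of a
spanning subgraph `G'`. Every vertex has a neighbour in `P`, and every vertex of `P` a neighbour
in `D`; since the subdivision vertices have degree two and a leaf of `H` stays a vertex of degree
one, these two facts propagate along the paths `u, u_e, v_e, v`: leaves of `H` lie in `D`, then
their supports, hence (by the corona hypothesis) all original vertices, and then all subdivision
vertices lie in `P`. The same two facts now force every edge of `S₂(H)` into `G'`.
-/

namespace IsDPPair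

variable {G : SimpleGraph V} {D P : Set V} (hDP : IsDPPair G D P)
include hDP

theorem mem_dom_or_mem_paired (x : V) : x ∈ D ∨ x ∈ P := by
  simpa using hDP.2.1.ge (Set.mem_univ x)

theorem notMem_paired_of_mem_dom {x : V} (hx : x ∈ D) : x ∉ P :=
  Set.disjoint_left.mp hDP.1 hx

theorem exists_paired_adj (x : V) : ∃ y ∈ P, G.Adj x y := by
  by_cases hx : x ∈ P
  · obtain ⟨m, hm⟩ := hDP.2.2.2.2
    exact ⟨m x, (hm x hx).1, (hm x hx).2.1⟩
  · exact hDP.2.2.2.1 x hx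

theorem exists_dom_adj_of_mem_paired {x : V} (hx : x ∈ P) : ∃ y ∈ D, G.Adj x y :=
  hDP.2.2.1 x fun hxD => hDP.notMem_paired_of_mem_dom hxD hx

theorem mem_dom_of_adj_subsingleton {x : V} (hx : ∀ y z, G.Adj x y → G.Adj x z → y = z) :
    x ∈ D := by
  refine (hDP.mem_dom_or_mem_paired x).resolve_right fun hxP => ?_
  obtain ⟨y, hyP, hxy⟩ := hDP.exists_paired_adj x
  obtain ⟨z, hzD, hxz⟩ := hDP.exists_dom_adj_of_mem_paired hxP
  exact hDP.notMem_paired_of_mem_dom hzD (hx y z hxy hxz ▸ hyP)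

end IsDPPair

theorem IsLeaf.exists_adj {H : SimpleGraph V} {u : V} (hu : IsLeaf H u) : ∃ w, H.Adj u w :=
  Set.nonempty_of_ncard_ne_zero (hu.symm ▸ one_ne_zero)

theorem IsLeaf.eq_of_adj {H : SimpleGraph V} {u w w' : V} (hu : IsLeaf H u)
    (hw : H.Adj u w) (hw' : H.Adj u w') : w = w' :=
  (Set.ncard_le_one_iff (Set.finite_of_ncard_ne_zero (hu.symm ▸ one_ne_zero))).mp hu.le hw hw'

theorem exists_adj_of_isLeaf_or_isSupport {H : SimpleGraph V} {u : V}
    (hu : IsLeaf H u ∨ IsSupport H u) : ∃ w, H.Adj u w :=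
  hu.elim IsLeaf.exists_adj fun ⟨w, hw, _⟩ => ⟨w, hw⟩

namespace S2

variable {H : SimpleGraph V}

/-- `Sum.inr e` and `Sum.inr (Arc.swap e)` are the two subdivision vertices on the same edge. -/
def Arc.swap (e : {e : V × V // H.Adj e.1 e.2}) : {e : V × V // H.Adj e.1 e.2} :=
  ⟨(e.1.2, e.1.1), e.2.symm⟩

theorem adj_inr_inl (e : {e : V × V // H.Adj e.1 e.2}) :
    (S2 H).Adj (Sum.inr e) (Sum.inl e.1.1) := rfl

theorem adj_inr_swap (e : {e : V × V // H.Adj e.1 e.2}) :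
    (S2 H).Adj (Sum.inr e) (Sum.inr (Arc.swap e)) := ⟨rfl, rfl⟩

theorem eq_of_adj_inr {e : {e : V × V // H.Adj e.1 e.2}} {x : V ⊕ {e : V × V // H.Adj e.1 e.2}}
    (h : (S2 H).Adj (Sum.inr e) x) : x = Sum.inl e.1.1 ∨ x = Sum.inr (Arc.swap e) := by
  rcases x with u | f
  · exact Or.inl (congrArg Sum.inl (show u = e.1.1 from h))
  · obtain ⟨h₁, h₂⟩ : e.1.1 = f.1.2 ∧ e.1.2 = f.1.1 := h
    exact Or.inr (congrArg Sum.inr (Subtype.ext (Prod.ext h₂.symm h₁.symm)))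

theorem eq_of_adj_inl_of_isLeaf {l w : V} {x : V ⊕ {e : V × V // H.Adj e.1 e.2}}
    (hl : IsLeaf H l) (hlw : H.Adj l w) (h : (S2 H).Adj (Sum.inl l) x) :
    x = Sum.inr ⟨(l, w), hlw⟩ := by
  rcases x with u | f
  · exact h.elim
  · obtain rfl : l = f.1.1 := h
    exact congrArg Sum.inr (Subtype.ext (Prod.ext rfl (hl.eq_of_adj f.2 hlw)))

theorem le_of_forall_adj {G' : SimpleGraph (V ⊕ {e : V × V // H.Adj e.1 e.2})}
    (hinl : ∀ e, G'.Adj (Sum.inr e) (Sum.inl e.1.1))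
    (hswap : ∀ e, G'.Adj (Sum.inr e) (Sum.inr (Arc.swap e))) : S2 H ≤ G' := by
  intro x y hxy
  rcases x with u | e
  · obtain ⟨e, rfl, rfl⟩ : ∃ e, y = Sum.inr e ∧ u = e.1.1 := by
      rcases y with w | e
      · exact hxy.elim
      · exact ⟨e, rfl, hxy⟩
    exact (hinl e).symm
  · rcases eq_of_adj_inr hxy with rfl | rfl
    exacts [hinl e, hswap e]

theorem isDPPair (hH : ∀ u, ∃ w, H.Adj u w) :
    IsDPPair (S2 H) (Set.range Sum.inl) (Set.range Sum.inr) := by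
  refine ⟨Set.disjoint_range_iff.mpr fun u e => Sum.inl_ne_inr, Set.range_inl_union_range_inr,
    ?_, ?_, fun x => match x with
      | Sum.inl u => Sum.inl u
      | Sum.inr e => Sum.inr (Arc.swap e), ?_⟩
  · rintro (u | e) hx
    · exact (hx ⟨u, rfl⟩).elim
    · exact ⟨_, ⟨e.1.1, rfl⟩, adj_inr_inl e⟩
  · rintro (u | e) hx
    · obtain ⟨w, hw⟩ := hH u
      exact ⟨_, ⟨⟨(u, w), hw⟩, rfl⟩, (adj_inr_inl ⟨(u, w), hw⟩).symm⟩
    · exact (hx ⟨e, rfl⟩).elim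
  · rintro _ ⟨e, rfl⟩
    exact ⟨⟨Arc.swap e, rfl⟩, adj_inr_swap e, rfl⟩

section Subgraph

variable {G' : SimpleGraph (V ⊕ {e : V × V // H.Adj e.1 e.2})} (hG' : G' ≤ S2 H)
include hG'

theorem adj_swap_of_exists_adj_mem {S : Set (V ⊕ {e : V × V // H.Adj e.1 e.2})}
    {e : {e : V × V // H.Adj e.1 e.2}} (hS : ∃ y ∈ S, G'.Adj (Sum.inr e) y)
    (he : Sum.inl e.1.1 ∉ S) :
    G'.Adj (Sum.inr e) (Sum.inr (Arc.swap e)) ∧ Sum.inr (Arc.swap e) ∈ S := by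
  obtain ⟨y, hyS, hy⟩ := hS
  rcases eq_of_adj_inr (hG' hy) with rfl | rfl
  exacts [(he hyS).elim, ⟨hy, hyS⟩]

theorem adj_inl_of_exists_adj_mem {S : Set (V ⊕ {e : V × V // H.Adj e.1 e.2})}
    {e : {e : V × V // H.Adj e.1 e.2}} (hS : ∃ y ∈ S, G'.Adj (Sum.inr e) y)
    (he : Sum.inr (Arc.swap e) ∉ S) :
    G'.Adj (Sum.inr e) (Sum.inl e.1.1) ∧ Sum.inl e.1.1 ∈ S := by
  obtain ⟨y, hyS, hy⟩ := hS
  rcases eq_of_adj_inr (hG' hy) with rfl | rfl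
  exacts [⟨hy, hyS⟩, (he hyS).elim]

variable {D P : Set (V ⊕ {e : V × V // H.Adj e.1 e.2})} (hDP : IsDPPair G' D P)
include hDP

theorem inl_mem_dom_of_isLeaf {l : V} (hl : IsLeaf H l) : Sum.inl l ∈ D := by
  obtain ⟨w, hlw⟩ := hl.exists_adj
  refine hDP.mem_dom_of_adj_subsingleton fun y z hy hz => ?_
  rw [eq_of_adj_inl_of_isLeaf hl hlw (hG' hy), eq_of_adj_inl_of_isLeaf hl hlw (hG' hz)]

theorem inl_mem_dom_of_isSupport {u : V} (hu : IsSupport H u) : Sum.inl u ∈ D := by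
  obtain ⟨l, hul, hl⟩ := hu
  have hlD := inl_mem_dom_of_isLeaf hG' hDP hl
  set e : {e : V × V // H.Adj e.1 e.2} := ⟨(l, u), hul.symm⟩
  have heP : Sum.inr e ∈ P := by
    obtain ⟨y, hyP, hy⟩ := hDP.exists_paired_adj (Sum.inl l)
    rwa [eq_of_adj_inl_of_isLeaf hl hul.symm (hG' hy)] at hyP
  have hsP : Sum.inr (Arc.swap e) ∈ P :=
    (adj_swap_of_exists_adj_mem hG' (hDP.exists_paired_adj _)
      (hDP.notMem_paired_of_mem_dom hlD)).2
  exact (adj_inl_of_exists_adj_mem hG' (hDP.exists_dom_adj_of_mem_paired hsP)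
    fun heD => hDP.notMem_paired_of_mem_dom heD heP).2

variable (hinl : ∀ u, Sum.inl u ∈ D)
include hinl

theorem inr_mem_paired (e : {e : V × V // H.Adj e.1 e.2}) : Sum.inr e ∈ P :=
  (adj_swap_of_exists_adj_mem hG' (hDP.exists_paired_adj (Sum.inr (Arc.swap e)))
    (hDP.notMem_paired_of_mem_dom (hinl _))).2

theorem le_of_forall_inl_mem_dom : S2 H ≤ G' := by
  have hP := inr_mem_paired hG' hDP hinl
  refine le_of_forall_adj (fun e => ?_) (fun e => ?_)
  · exact (adj_inl_of_exists_adj_mem hG' (hDP.exists_dom_adj_of_mem_paired (hP e))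
      fun hsD => hDP.notMem_paired_of_mem_dom hsD (hP _)).1
  · exact (adj_swap_of_exists_adj_mem hG' (hDP.exists_paired_adj _)
      (hDP.notMem_paired_of_mem_dom (hinl _))).1

end Subgraph

end S2

theorem stmt17_general {V : Type*} (H : SimpleGraph V)
    (hcorona : ∀ v : V, IsLeaf H v ∨ IsSupport H v) :
    IsMinimalDPDP (S2 H) := by
  refine ⟨⟨_, _, S2.isDPPair fun u => exists_adj_of_isLeaf_or_isSupport (hcorona u)⟩, ?_⟩
  rintro G' hlt ⟨D, P, hDP⟩
  have hinl : ∀ u, Sum.inl u ∈ D := fun u =>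
    (hcorona u).elim (S2.inl_mem_dom_of_isLeaf hlt.le hDP) (S2.inl_mem_dom_of_isSupport hlt.le hDP)
  exact hlt.not_ge (S2.le_of_forall_inl_mem_dom hlt.le hDP hinl)

/-- If `H` is a corona graph — obtained from some graph by attaching at least one
pendant edge to every vertex, so that every vertex of `H` is a leaf or a support
vertex — then its double subdivision `S₂(H)` is a minimal DPDP-graph. -/
theorem stmt17 {V : Type*} [Fintype V] (H : SimpleGraph V)
    (hcorona : ∀ v : V, IsLeaf H v ∨ IsSupport H v) :
    IsMinimalDPDP (S2 H) :=
  stmt17_general H hcorona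
end
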